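/- arXiv:2011.14426 — 6 statements merged into one kernel-verified Lean document; each statement's English description precedes it below -/
import Mathlib

section
/- Let n be an even positive integer. Every permutation in S_n whose cycle decomposition either consists entirely of cycles of even length, or consists of exactly two cycles of equal length n/2 (including fixed points counted appropriately), lies in the stabilizer of some partition of {1,...,n} into two blocks of size n/2. -/
/-!
Along a cycle of even length the points alternate between even and odd positions, and the cycle
maps the even positions onto the odd ones. Taking the even positions of every cycle gives a set
`Δ` of half the points with `g Δ = Δᶜ`. If instead `g` has two cycles of length `n / 2`, the
support of one of them is a `g`-invariant block.
-/

open Finset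

namespace Equiv.Perm

variable {α : Type*} [DecidableEq α] [Fintype α] {σ τ : Perm α}

theorem Disjoint.mul_apply_of_mem_support_left (h : Disjoint σ τ) {x : α} (hx : x ∈ σ.support) :
    (σ * τ) x = σ x := by
  rw [mul_apply, (h x).resolve_left (mem_support.1 hx)]

theorem Disjoint.mul_apply_of_mem_support_right (h : Disjoint σ τ) {x : α} (hx : x ∈ τ.support) :
    (σ * τ) x = τ x := by
  rw [h.commute.eq]
  exact h.symm.mul_apply_of_mem_support_left hx

theorem image_support_eq_support (σ : Perm α) : σ.support.image σ = σ.support := by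
  apply coe_injective
  rw [coe_image]
  exact Set.image_perm fun x hx => mem_coe.2 (mem_support.2 hx)

theorem IsCycle.exists_image_eq_support_sdiff (hσ : σ.IsCycle) (heven : Even #σ.support) :
    ∃ Δ ⊆ σ.support, Δ.image σ = σ.support \ Δ := by
  classical
  obtain ⟨a, ha⟩ := hσ.nonempty_support
  have hcyc : σ.IsCycleOn (σ.support : Set α) := by
    rw [coe_support_eq_set_support]
    exact hσ.isCycleOn
  -- the position of a point along the cycle is well defined mod `#σ.support`, hence mod 2
  have parity {i j : ℕ} (hij : (σ ^ i) a = (σ ^ j) a) : i ≡ j [MOD 2] :=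
    ((hcyc.pow_apply_eq_pow_apply ha).1 hij).of_dvd (even_iff_two_dvd.1 heven)
  have succ_pow (i : ℕ) : σ ((σ ^ i) a) = (σ ^ (i + 1)) a := by rw [pow_succ', mul_apply]
  refine ⟨σ.support.filter fun x => ∃ i, (σ ^ (2 * i)) a = x, filter_subset _ _, ?_⟩
  ext x
  simp only [mem_image, mem_sdiff, mem_filter, not_and, not_exists]
  constructor
  · rintro ⟨-, ⟨-, i, rfl⟩, rfl⟩
    refine ⟨apply_mem_support.2 (pow_apply_mem_support.2 ha), fun _ j hj => ?_⟩
    rw [succ_pow] at hj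
    have : 2 * j % 2 = (2 * i + 1) % 2 := parity hj
    omega
  · rintro ⟨hx, hodd⟩
    obtain ⟨m, -, rfl⟩ := hcyc.exists_pow_eq ha hx
    obtain ⟨i, rfl⟩ | ⟨i, rfl⟩ := Nat.even_or_odd m
    · exact absurd (two_mul i ▸ rfl) (hodd hx i)
    · exact ⟨_, ⟨pow_apply_mem_support.2 ha, i, rfl⟩, succ_pow _⟩

theorem Disjoint.image_mul_union {Δσ Δτ : Finset α} (h : Disjoint σ τ) (hσ : Δσ ⊆ σ.support)
    (hτ : Δτ ⊆ τ.support) : (Δσ ∪ Δτ).image (σ * τ) = Δσ.image σ ∪ Δτ.image τ := by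
  rw [image_union, image_congr fun x hx => h.mul_apply_of_mem_support_left (hσ hx),
    image_congr fun x hx => h.mul_apply_of_mem_support_right (hτ hx)]

theorem exists_image_eq_support_sdiff_of_forall_even (h : ∀ c ∈ σ.cycleType, Even c) :
    ∃ Δ ⊆ σ.support, Δ.image σ = σ.support \ Δ := by
  induction σ using cycle_induction_on with
  | base_one => exact ⟨∅, empty_subset _, by simp⟩
  | base_cycles σ hσ => exact hσ.exists_image_eq_support_sdiff (h _ (by simp [hσ.cycleType]))
  | induction_disjoint σ τ hd _ ihσ ihτ =>
    rw [hd.cycleType_mul] at h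
    obtain ⟨Δσ, hσ, himσ⟩ := ihσ fun c hc => h c (Multiset.mem_add.2 (.inl hc))
    obtain ⟨Δτ, hτ, himτ⟩ := ihτ fun c hc => h c (Multiset.mem_add.2 (.inr hc))
    have hdisj := disjoint_left.1 hd.disjoint_support
    refine ⟨Δσ ∪ Δτ, hd.support_mul ▸ union_subset_union hσ hτ, ?_⟩
    rw [hd.image_mul_union hσ hτ, himσ, himτ, hd.support_mul]
    ext x
    have := @hσ x
    have := @hτ x
    have := @hdisj x
    simp only [mem_union, mem_sdiff]
    tauto

theorem two_mul_card_eq_card_support {Δ : Finset α} (hΔ : Δ ⊆ σ.support)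
    (himg : Δ.image σ = σ.support \ Δ) : 2 * #Δ = #σ.support := by
  have := card_sdiff_of_subset hΔ
  rw [← himg, card_image_of_injective _ σ.injective] at this
  have := card_le_card hΔ
  omega

theorem exists_image_eq_of_mem_cycleType {k : ℕ} (hk : k ∈ σ.cycleType) :
    ∃ Δ : Finset α, #Δ = k ∧ Δ.image σ = Δ := by
  obtain ⟨c, τ, rfl, hd, -, rfl⟩ := mem_cycleType_iff.1 hk
  refine ⟨c.support, rfl, ?_⟩
  rw [image_congr fun x hx => hd.mul_apply_of_mem_support_left hx, image_support_eq_support]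

end Equiv.Perm

open Equiv.Perm in
theorem even_cycles_in_two_block_stabilizer_general (n : ℕ)
    (g : Equiv.Perm (Fin n))
    (hg : (g.support = Finset.univ ∧ ∀ c ∈ g.cycleType, Even c) ∨
      g.cycleType = {n / 2, n / 2}) :
    ∃ Δ : Finset (Fin n), Δ.card = n / 2 ∧ (Δ.image g = Δ ∨ Δ.image g = Δᶜ) := by
  rcases hg with ⟨hsupp, heven⟩ | hct
  · obtain ⟨Δ, hΔ, himg⟩ := exists_image_eq_support_sdiff_of_forall_even heven
    have hcard := two_mul_card_eq_card_support hΔ himg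
    rw [hsupp, card_univ, Fintype.card_fin] at hcard
    rw [hsupp, ← compl_eq_univ_sdiff] at himg
    exact ⟨Δ, by omega, Or.inr himg⟩
  · obtain ⟨Δ, hcard, himg⟩ :=
      exists_image_eq_of_mem_cycleType (hct ▸ Multiset.mem_cons_self _ _ : n / 2 ∈ g.cycleType)
    exact ⟨Δ, hcard, Or.inl himg⟩

theorem even_cycles_in_two_block_stabilizer (n : ℕ) (hn : Even n) (h0 : 0 < n)
    (g : Equiv.Perm (Fin n))
    (hg : (g.support = Finset.univ ∧ ∀ c ∈ g.cycleType, Even c) ∨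
      g.cycleType = {n / 2, n / 2}) :
    ∃ Δ : Finset (Fin n), Δ.card = n / 2 ∧ (Δ.image g = Δ ∨ Δ.image g = Δᶜ) :=
  even_cycles_in_two_block_stabilizer_general n g hg
end

section
/- Let n be even. The symmetric group S_n is the union of the following family of proper subgroups: the stabilizers of partitions of {1,...,n} into 2 blocks of size n/2, together with the setwise stabilizers of subsets Δ ⊆ {1,...,n} of odd size |Δ| < n/2. -/
open Equiv Equiv.Perm Finset

lemma my_card_filter_odd_mod_two (m : Multiset ℕ) :
    (m.filter (fun k => k % 2 = 1)).card % 2 = m.sum % 2 := by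
  induction m using Multiset.induction_on with
  | empty => simp
  | cons a s ih =>
    rcases Nat.mod_two_eq_zero_or_one a with h | h <;>
      simp [Multiset.filter_cons, h, Multiset.sum_cons] <;> omega

lemma my_period_dvd {α : Type*} [Fintype α] [DecidableEq α] (g : Perm α) (x : α)
    (hx : g x ≠ x) {k : ℕ} (hk : (g ^ k) x = x) : (g.cycleOf x).support.card ∣ k := by
  have hc : (g.cycleOf x).IsCycle := isCycle_cycleOf g hx
  have hcx : (g.cycleOf x) x ≠ x := by rwa [cycleOf_apply_self]
  have h1 : ((g.cycleOf x) ^ k) x = x := by rwa [cycleOf_pow_apply_self]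
  have h2 : (g.cycleOf x) ^ k = 1 := (hc.pow_eq_one_iff' hcx).2 h1
  have h3 := orderOf_dvd_of_pow_eq_one h2
  rwa [hc.orderOf] at h3

lemma my_not_sameCycle_sq {α : Type*} [Fintype α] [DecidableEq α] (g : Perm α) (x : α)
    (hx : g x ≠ x) (he : Even (g.cycleOf x).support.card) :
    ¬ (g ^ 2).SameCycle x (g x) := by
  intro h
  obtain ⟨i, _, hi⟩ := h.exists_pow_eq'
  rw [← pow_mul] at hi
  rcases Nat.eq_zero_or_pos i with rfl | hipos
  · simp at hi; exact hx hi.symm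
  · have h1 : (g ^ (2 * i - 1)) x = x := by
      apply g.injective
      rw [← Equiv.Perm.mul_apply, ← pow_succ']
      have : (2 * i - 1) + 1 = 2 * i := by omega
      rw [this, hi]
    have h2 := my_period_dvd g x hx h1
    obtain ⟨m, hm⟩ := he
    have : 2 ∣ 2 * i - 1 := Dvd.dvd.trans ⟨m, by omega⟩ h2
    omega

lemma my_sameCycle_sq_or {α : Type*} [Fintype α] [DecidableEq α] (g : Perm α) (x y : α)
    (h : g.SameCycle x y) : (g ^ 2).SameCycle x y ∨ (g ^ 2).SameCycle x (g y) := by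
  obtain ⟨i, _, hi⟩ := h.exists_pow_eq'
  rcases Nat.even_or_odd i with ⟨j, hj⟩ | ⟨j, hj⟩
  · left
    exact ⟨j, by rw [zpow_natCast, ← pow_mul, show 2 * j = i by omega, hi]⟩
  · right
    refine ⟨((j + 1 : ℕ) : ℤ), ?_⟩
    rw [zpow_natCast, ← pow_mul, show 2 * (j + 1) = i + 1 by omega, pow_succ',
      Equiv.Perm.mul_apply, hi]

lemma my_even_case {α : Type*} [Fintype α] [DecidableEq α] (g : Perm α)
    (hfix : ∀ x, g x ≠ x) (heven : ∀ x, Even (g.cycleOf x).support.card) :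
    ∃ Δ : Finset α, Δ.image g = Δᶜ := by
  classical
  set s : Setoid α := ⟨g.SameCycle, ⟨fun x => Equiv.Perm.SameCycle.refl g x,
    fun h => h.symm, fun h1 h2 => h1.trans h2⟩⟩ with hs
  set t : α → α := fun x => @Quotient.out _ s (@Quotient.mk _ s x) with htdef
  have ht1 : ∀ x, g.SameCycle (t x) x := fun x =>
    @Quotient.exact _ s _ _ (@Quotient.out_eq _ s (@Quotient.mk _ s x))
  have ht2 : ∀ x y, g.SameCycle x y → t x = t y := fun x y h =>
    congrArg (@Quotient.out _ s) (@Quotient.sound _ s _ _ h)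
  refine ⟨Finset.univ.filter (fun x => (g ^ 2).SameCycle x (t x)), ?_⟩
  ext y
  simp only [Finset.mem_image, Finset.mem_filter, Finset.mem_univ, true_and,
    Finset.mem_compl]
  have hty : t (g⁻¹ y) = t y := ht2 _ _ ⟨1, by simp⟩
  constructor
  · rintro ⟨x, hx, rfl⟩ hgx
    have h1 : (g ^ 2).SameCycle x (t (g x)) := by rw [← ht2 x (g x) ⟨1, by simp⟩]; exact hx
    exact my_not_sameCycle_sq g x (hfix x) (heven x) (h1.trans hgx.symm)
  · intro hy
    refine ⟨g⁻¹ y, ?_, by simp⟩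
    rw [hty]
    have h2 := my_sameCycle_sq_or g y (t y) (ht1 y).symm
    rcases h2 with h2 | h2
    · exact absurd h2 hy
    · obtain ⟨i, hi⟩ := h2
      refine ⟨i, ?_⟩
      have hc : Commute g⁻¹ ((g ^ 2) ^ i) :=
        (((Commute.refl g).pow_right 2).zpow_right i).inv_left
      have := DFunLike.congr_fun hc.eq y
      rw [Equiv.Perm.mul_apply, Equiv.Perm.mul_apply] at this
      rw [← this, hi]
      simp

lemma my_image_support {α : Type*} [Fintype α] [DecidableEq α] {g c : Perm α}
    (hc : c ∈ g.cycleFactorsFinset) : c.support.image g = c.support := by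
  apply Finset.eq_of_subset_of_card_le
  · intro y hy
    obtain ⟨x, hx, rfl⟩ := Finset.mem_image.1 hy
    rw [← (mem_cycleFactorsFinset_iff.1 hc).2 x hx]
    exact apply_mem_support.2 hx
  · rw [Finset.card_image_of_injective _ g.injective]

theorem covering_of_symmetric_group (n : ℕ) (hn : Even n) (h4 : 4 ≤ n) :
    (∀ g : Equiv.Perm (Fin n),
      (∃ Δ : Finset (Fin n), Δ.card = n / 2 ∧ (Δ.image g = Δ ∨ Δ.image g = Δᶜ)) ∨
      (∃ Δ : Finset (Fin n), Odd Δ.card ∧ Δ.card < n / 2 ∧ Δ.image g = Δ)) ∧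
    (∀ Δ : Finset (Fin n), Δ.card = n / 2 →
      ∃ g : Equiv.Perm (Fin n), ¬ (Δ.image g = Δ ∨ Δ.image g = Δᶜ)) ∧
    (∀ Δ : Finset (Fin n), Odd Δ.card → Δ.card < n / 2 →
      ∃ g : Equiv.Perm (Fin n), Δ.image g ≠ Δ) := by
  classical
  obtain ⟨n2, hn2⟩ := hn
  refine ⟨?_, ?_, ?_⟩
  · -- part 1
    intro g
    by_cases hfix : ∃ x, g x = x
    · -- a fixed point gives a singleton invariant set
      obtain ⟨x, hx⟩ := hfix
      right
      refine ⟨{x}, by simp, by simp only [Finset.card_singleton]; omega, by simp [hx]⟩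
    · push_neg at hfix
      have hsupp : g.support = Finset.univ := by
        ext x; simp [Equiv.Perm.mem_support, hfix x]
      have hsum : g.cycleType.sum = n := by
        rw [Equiv.Perm.sum_cycleType, hsupp, Finset.card_univ, Fintype.card_fin]
      by_cases hodd : ∃ ℓ ∈ g.cycleType, ℓ % 2 = 1
      · -- there is an odd cycle; there must be at least two, so the smaller is ≤ n/2
        obtain ⟨a, ha, hao⟩ := hodd
        obtain ⟨F, hF⟩ : ∃ F, F = g.cycleType.filter (fun k => k % 2 = 1) := ⟨_, rfl⟩
        have haF : a ∈ F := by rw [hF]; exact Multiset.mem_filter.2 ⟨ha, hao⟩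
        have hFcard : Multiset.card F % 2 = 0 := by
          rw [hF, my_card_filter_odd_mod_two, hsum]; omega
        have hF2 : 2 ≤ Multiset.card F := by
          have h1 : 0 < Multiset.card F := Multiset.card_pos_iff_exists_mem.2 ⟨a, haF⟩
          omega
        have hberase : 0 < Multiset.card (F.erase a) := by
          have h2 := Multiset.card_erase_of_mem haF
          rw [Nat.pred_eq_sub_one] at h2
          omega
        obtain ⟨b, hbF⟩ := Multiset.card_pos_iff_exists_mem.1 hberase
        have hbF' : b ∈ F := Multiset.mem_of_mem_erase hbF
        have hbmem : b ∈ g.cycleType ∧ b % 2 = 1 := by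
          rw [hF] at hbF'; exact Multiset.mem_filter.1 hbF'
        have hbo : b % 2 = 1 := hbmem.2
        have hsumF : a + b ≤ n := by
          have hb2 : b ≤ (F.erase a).sum := Multiset.le_sum_of_mem hbF
          have hFsum : F.sum = a + (F.erase a).sum := by
            conv_lhs => rw [← Multiset.cons_erase haF]
            rw [Multiset.sum_cons]
          have hFle : F.sum ≤ n := by
            have hle : F ≤ g.cycleType := by rw [hF]; exact Multiset.filter_le _ _
            obtain ⟨u, hu⟩ := Multiset.le_iff_exists_add.1 hle
            rw [← hsum, hu, Multiset.sum_add]; exact Nat.le_add_right _ _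
          omega
        set ℓ := min a b with hℓ
        have hℓmem : ℓ ∈ g.cycleType := by
          rcases min_choice a b with h | h <;> rw [hℓ, h]
          · exact ha
          · exact hbmem.1
        have hℓodd : ℓ % 2 = 1 := by rcases min_choice a b with h | h <;> rw [hℓ, h] <;> omega
        have hℓle : ℓ ≤ n / 2 := by rw [hℓ]; omega
        obtain ⟨c, hcmem, hcard⟩ := Multiset.mem_map.1 hℓmem
        simp only [Function.comp_apply] at hcard
        rcases Nat.lt_or_ge ℓ (n / 2) with hlt | hge
        · right
          exact ⟨c.support, by rw [hcard]; exact Nat.odd_iff.2 hℓodd, by rw [hcard]; exact hlt,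
            my_image_support hcmem⟩
        · left
          have : ℓ = n / 2 := le_antisymm hℓle hge
          exact ⟨c.support, by rw [hcard, this], Or.inl (my_image_support hcmem)⟩
      · -- all cycles even
        push_neg at hodd
        have heven : ∀ x, Even (g.cycleOf x).support.card := by
          intro x
          have hx : x ∈ g.support := by rw [hsupp]; exact Finset.mem_univ x
          have hmem : (g.cycleOf x).support.card ∈ g.cycleType :=
            Multiset.mem_map.2 ⟨g.cycleOf x, (cycleOf_mem_cycleFactorsFinset_iff).2 hx, rfl⟩
          have := hodd _ hmem
          exact Nat.even_iff.2 (by omega)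
        obtain ⟨Δ, hΔ⟩ := my_even_case g hfix heven
        left
        refine ⟨Δ, ?_, Or.inr hΔ⟩
        have h1 : Δ.card ≤ n := by
          have := Finset.card_le_card (Finset.subset_univ Δ)
          rwa [Finset.card_univ, Fintype.card_fin] at this
        have h2 : Δᶜ.card = n - Δ.card := by
          rw [Finset.card_compl, Fintype.card_fin]
        have h3 : Δᶜ.card = Δ.card := by
          rw [← hΔ, Finset.card_image_of_injective _ g.injective]
        omega
  · -- part 2
    intro Δ hΔ
    have hΔ2 : 2 ≤ Δ.card := by omega
    have hcompl : Δᶜ.Nonempty := by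
      rw [← Finset.card_pos, Finset.card_compl, Fintype.card_fin]; omega
    obtain ⟨a, ha⟩ := Finset.card_pos.1 (by omega : 0 < Δ.card)
    obtain ⟨b, hb⟩ := hcompl
    have hbΔ : b ∉ Δ := Finset.mem_compl.1 hb
    refine ⟨Equiv.swap a b, ?_⟩
    rintro (h | h)
    · have : b ∈ Δ := by
        rw [← h]
        exact Finset.mem_image.2 ⟨a, ha, by simp⟩
      exact hbΔ this
    · obtain ⟨c, hc, hca⟩ := Finset.exists_mem_ne (s := Δ) (by omega) a
      have hcb : c ≠ b := fun hcb => hbΔ (hcb ▸ hc)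
      have : c ∈ Δᶜ := by
        rw [← h]
        exact Finset.mem_image.2 ⟨c, hc, by rw [Equiv.swap_apply_of_ne_of_ne hca hcb]⟩
      exact (Finset.mem_compl.1 this) hc
  · -- part 3
    intro Δ hodd hlt
    obtain ⟨k, hk⟩ := hodd
    obtain ⟨a, ha⟩ := Finset.card_pos.1 (show 0 < Δ.card by omega)
    have hcompl : Δᶜ.Nonempty := by
      rw [← Finset.card_pos, Finset.card_compl, Fintype.card_fin]; omega
    obtain ⟨b, hb⟩ := hcompl
    have hbΔ : b ∉ Δ := Finset.mem_compl.1 hb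
    refine ⟨Equiv.swap a b, fun h => ?_⟩
    have : b ∈ Δ := by
      rw [← h]
      exact Finset.mem_image.2 ⟨a, ha, by simp⟩
    exact hbΔ this
end

section
/- Let n be a positive integer, M a subgroup of S_n, and g ∈ S_n an element that is either an n-cycle or a product of two disjoint cycles of lengths s and n-s (with 1 ≤ s ≤ n/2) covering {1,...,n}. Then g is contained in at most n² conjugates of M in S_n. -/
/-!
If `x⁻¹ g x ∈ M`, the whole coset `x M` gives the same conjugate `x M x⁻¹ ∋ g`, while the
elements `x` with `x⁻¹ g x = v` form at most one right coset of the centralizer `C(g)`.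
Counting `{x | x⁻¹ g x ∈ M}` both ways shows that `g` lies in at most `|C(g)|` conjugates
of `M`. Every point lies in the `g`-orbit of one of at most two points `a, b`, and a
permutation commuting with `g` is determined by the images of `a` and `b`, so `|C(g)| ≤ n²`.
-/

open Finset

namespace Subgroup

variable {G : Type*} [Group G]

theorem mem_map_conj_iff (M : Subgroup G) {g x : G} :
    g ∈ M.map (MulAut.conj x).toMonoidHom ↔ x⁻¹ * g * x ∈ M := by
  rw [mem_map_equiv, MulAut.conj_symm_apply]

theorem map_conj_mul_of_mem (M : Subgroup G) (x : G) {y : G} (hy : y ∈ M) :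
    M.map (MulAut.conj (x * y)).toMonoidHom = M.map (MulAut.conj x).toMonoidHom := by
  ext g
  have : (x * y)⁻¹ * g * (x * y) = y⁻¹ * (x⁻¹ * g * x) * y := by group
  rw [mem_map_conj_iff, mem_map_conj_iff, this, mul_mem_cancel_right hy,
    mul_mem_cancel_left (inv_mem hy)]

theorem card_filter_conj_eq_le [Fintype G] [DecidableEq G] (g v : G) :
    #{x | x⁻¹ * g * x = v} ≤ Nat.card (centralizer {g}) := by
  classical
  rcases ({x | x⁻¹ * g * x = v} : Finset G).eq_empty_or_nonempty with h | ⟨x₀, hx₀⟩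
  · simp [h]
  rw [← SetLike.coe_sort_coe, Nat.card_eq_card_toFinset]
  refine card_le_card_of_injOn (· * x₀⁻¹) (fun y hy => ?_) (mul_left_injective _).injOn
  simp only [mem_filter, mem_univ, true_and, coe_filter, Set.mem_ofPred_eq] at hx₀ hy
  simp only [Set.coe_toFinset, SetLike.mem_coe, mem_centralizer_singleton_iff]
  calc y * x₀⁻¹ * g = y * (x₀⁻¹ * g * x₀) * x₀⁻¹ := by group
    _ = y * (y⁻¹ * g * y) * x₀⁻¹ := by rw [hx₀, hy]
    _ = g * (y * x₀⁻¹) := by group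

theorem card_filter_conj_mem_le [Fintype G] [DecidableEq G] (M : Subgroup G)
    [DecidablePred (· ∈ M)] (g : G) :
    #{x | x⁻¹ * g * x ∈ M} ≤ Nat.card (centralizer {g}) * Nat.card M := by
  have hM : #({x | x ∈ M} : Finset G) = Nat.card M := by
    rw [Nat.card_eq_fintype_card, Fintype.card_subtype]
  rw [← hM]
  refine card_le_mul_card_image_of_maps_to (f := fun x => x⁻¹ * g * x)
    (fun x hx => by simpa using hx) _ fun v _ => ?_
  exact (card_le_card (filter_subset_filter _ (filter_subset _ _))).trans
    (card_filter_conj_eq_le g v)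

theorem ncard_conj_mem_le_nat_card_centralizer [Finite G] (M : Subgroup G) (g : G) :
    {K : Subgroup G | (∃ x : G, K = M.map (MulAut.conj x).toMonoidHom) ∧ g ∈ K}.ncard ≤
      Nat.card (centralizer {g}) := by
  classical
  have := Fintype.ofFinite G
  set conj : G → Subgroup G := fun x => M.map (MulAut.conj x).toMonoidHom
  set S : Finset G := {x | x⁻¹ * g * x ∈ M}
  have hconj : {K : Subgroup G | (∃ x : G, K = conj x) ∧ g ∈ K} = S.image conj := by
    ext K
    simp only [Set.mem_ofPred_eq, coe_image, Set.mem_image, S, coe_filter, mem_univ, true_and]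
    constructor
    · rintro ⟨⟨x, rfl⟩, hg⟩
      exact ⟨x, (mem_map_conj_iff M).mp hg, rfl⟩
    · rintro ⟨x, hx, rfl⟩
      exact ⟨⟨x, rfl⟩, (mem_map_conj_iff M).mpr hx⟩
  have hcoset : Nat.card M * #(S.image conj) ≤ #S := by
    rw [← SetLike.coe_sort_coe, Nat.card_eq_card_toFinset]
    refine mul_card_image_le_card S _ fun K hK => ?_
    obtain ⟨x, hx, rfl⟩ := mem_image.mp hK
    refine card_le_card_of_injOn (x * ·) (fun y hy => ?_) (mul_right_injective x).injOn
    have hxy : conj (x * y) = conj x := map_conj_mul_of_mem M x (by simpa using hy)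
    have hg : g ∈ conj (x * y) := hxy ▸ (mem_map_conj_iff M).mpr (by simpa [S] using hx)
    simpa [S, hxy] using (mem_map_conj_iff M).mp hg
  rw [hconj, Set.ncard_coe_finset]
  refine Nat.le_of_mul_le_mul_left ?_ (Nat.card_pos (α := M))
  rw [mul_comm (Nat.card M) (Nat.card _)]
  exact hcoset.trans (card_filter_conj_mem_le M g)

end Subgroup

namespace Equiv.Perm

variable {α : Type*} {c d : Perm α}

theorem Disjoint.sameCycle_mul_left {x y : α} (h : c.Disjoint d) (hxy : c.SameCycle x y) :
    (c * d).SameCycle x y := by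
  rcases h x with hcx | hdx
  · exact hxy.eq_of_left hcx ▸ SameCycle.refl _ _
  · obtain ⟨i, rfl⟩ := hxy
    exact ⟨i, by rw [h.commute.mul_zpow, mul_apply, zpow_apply_eq_self_of_apply_eq_self hdx]⟩

theorem Disjoint.sameCycle_mul_right {x y : α} (h : c.Disjoint d) (hxy : d.SameCycle x y) :
    (c * d).SameCycle x y := by
  rw [h.commute.eq]
  exact h.symm.sameCycle_mul_left hxy

theorem IsCycle.sameCycle_mul_or [Fintype α] [DecidableEq α] (hc : c.IsCycle) (hd : d.IsCycle)
    (hcd : c.Disjoint d) {a b x : α} (ha : a ∈ c.support) (hb : b ∈ d.support)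
    (hx : x ∈ c.support ∪ d.support) : (c * d).SameCycle a x ∨ (c * d).SameCycle b x := by
  rcases mem_union.mp hx with hx | hx
  · exact Or.inl (hcd.sameCycle_mul_left (hc.sameCycle (mem_support.mp ha) (mem_support.mp hx)))
  · exact Or.inr (hcd.sameCycle_mul_right (hd.sameCycle (mem_support.mp hb) (mem_support.mp hx)))

theorem nat_card_centralizer_le_pow [Finite α] (g : Perm α) (T : Finset α)
    (hT : ∀ x, ∃ t ∈ T, g.SameCycle t x) :
    Nat.card (Subgroup.centralizer {g}) ≤ Nat.card α ^ T.card := by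
  have commute_zpow_apply : ∀ k ∈ Subgroup.centralizer {g}, ∀ (i : ℤ) (t : α),
      k ((g ^ i) t) = (g ^ i) (k t) := fun k hk i t =>
    DFunLike.congr_fun (Commute.zpow_right (Subgroup.mem_centralizer_singleton_iff.mp hk) i) t
  calc Nat.card (Subgroup.centralizer {g}) ≤ Nat.card (T → α) := by
        refine Nat.card_le_card_of_injective (fun k t => k.1 t) fun k l hkl => ?_
        ext x
        obtain ⟨t, ht, i, rfl⟩ := hT x
        rw [commute_zpow_apply k k.2, commute_zpow_apply l l.2]
        exact congrArg _ (congrFun hkl ⟨t, ht⟩)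
    _ = Nat.card α ^ T.card := by simp [Nat.card_fun]

end Equiv.Perm

theorem at_most_n_sq_conjugates (n : ℕ) (M : Subgroup (Equiv.Perm (Fin n)))
    (g : Equiv.Perm (Fin n))
    (hg : (g.IsCycle ∧ g.support.card = n) ∨
      (∃ (s : ℕ) (c d : Equiv.Perm (Fin n)), 1 ≤ s ∧ 2 * s ≤ n ∧ g = c * d ∧
        c.IsCycle ∧ d.IsCycle ∧ Disjoint c.support d.support ∧
        c.support.card = s ∧ d.support.card = n - s ∧
        c.support ∪ d.support = Finset.univ)) :
    Set.ncard {K : Subgroup (Equiv.Perm (Fin n)) |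
      (∃ x : Equiv.Perm (Fin n),
        K = Subgroup.map (MulAut.conj x).toMonoidHom M) ∧ g ∈ K} ≤ n ^ 2 := by
  obtain ⟨a, b, hcover⟩ : ∃ a b : Fin n, ∀ x, g.SameCycle a x ∨ g.SameCycle b x := by
    rcases hg with ⟨hcyc, hcard⟩ | ⟨-, c, d, -, -, rfl, hc, hd, hsupp_disj, -, -, hcover⟩
    · obtain ⟨a, ha⟩ := hcyc.nonempty_support
      have hsupp : g.support = univ := eq_univ_of_card _ (by simpa using hcard)
      exact ⟨a, a, fun x => Or.inl <| hcyc.sameCycle (Equiv.Perm.mem_support.mp ha)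
        (Equiv.Perm.mem_support.mp (hsupp ▸ mem_univ x))⟩
    · obtain ⟨a, ha⟩ := hc.nonempty_support
      obtain ⟨b, hb⟩ := hd.nonempty_support
      have hcd := Equiv.Perm.disjoint_iff_disjoint_support.mpr hsupp_disj
      exact ⟨a, b, fun x => hc.sameCycle_mul_or hd hcd ha hb (hcover ▸ mem_univ x)⟩
  calc _ ≤ Nat.card (Subgroup.centralizer {g}) :=
        Subgroup.ncard_conj_mem_le_nat_card_centralizer M g
    _ ≤ Nat.card (Fin n) ^ ({a, b} : Finset (Fin n)).card :=
        g.nat_card_centralizer_le_pow {a, b} (by simpa using hcover)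
    _ ≤ n ^ 2 := by
        simpa using Nat.pow_le_pow_right (Fin.pos a) card_le_two
end

section
/- Let n be divisible by 4, let W ≤ S_n be the stabilizer of a partition of {1,...,n} into 4 blocks of size n/4, and let Δ ⊆ {1,...,n} with |Δ| = n/2. If some n-cycle lies in W and stabilizes the partition {Δ, Δᶜ}, then Δ is a union of 2 of the 4 blocks of W. -/
-- An n-cycle on Fin n has no nonempty invariant subset of size < n.
lemma no_invariant_subset (n : ℕ) (g : Equiv.Perm (Fin n)) (hc : g.IsCycle)
    (hs : g.support.card = n) (S : Finset (Fin n)) (hne : S.Nonempty)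
    (hlt : S.card < n) (hcl : ∀ x ∈ S, g x ∈ S) : False := by
  have hsupp : g.support = Finset.univ :=
    Finset.eq_univ_of_card _ (by simp [hs])
  obtain ⟨x, hx⟩ := hne
  have hpow : ∀ k : ℕ, (g ^ k) x ∈ S := by
    intro k
    induction k with
    | zero => simpa using hx
    | succ m ih => rw [pow_succ']; exact hcl _ ih
  have key : ∀ y, y ∈ S := by
    intro y
    have hgx : g x ≠ x := by
      rw [← Equiv.Perm.mem_support, hsupp]; exact Finset.mem_univ x
    have hgy : g y ≠ y := by
      rw [← Equiv.Perm.mem_support, hsupp]; exact Finset.mem_univ y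
    obtain ⟨k, hk⟩ := hc.exists_pow_eq hgx hgy
    rw [← hk]; exact hpow k
  have hU : S = Finset.univ := Finset.eq_univ_of_forall key
  rw [hU] at hlt
  simp at hlt

theorem four_block_union (n : ℕ) (h4 : 4 ∣ n) (h0 : 0 < n)
    (B : Fin 4 → Finset (Fin n))
    (hdisj : ∀ i j, i ≠ j → Disjoint (B i) (B j))
    (hcard : ∀ i, (B i).card = n / 4)
    (hunion : (Finset.univ : Finset (Fin 4)).biUnion B = Finset.univ)
    (Δ : Finset (Fin n)) (hΔ : Δ.card = n / 2)
    (hcycle : ∃ g : Equiv.Perm (Fin n), g.IsCycle ∧ g.support.card = n ∧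
      (∀ i, ∃ j, (B i).image g = B j) ∧ (Δ.image g = Δ ∨ Δ.image g = Δᶜ)) :
    ∃ i j : Fin 4, i ≠ j ∧ Δ = B i ∪ B j := by
  obtain ⟨g, hc, hs, hb, hd⟩ := hcycle
  have hn4 : 4 ≤ n := Nat.le_of_dvd h0 h4
  have hq1 : 1 ≤ n / 4 := Nat.one_le_div_iff (by norm_num) |>.mpr hn4
  have hq4 : 4 * (n / 4) = n := Nat.mul_div_cancel' h4
  -- the block permutation
  choose f hf using hb
  have hfmem : ∀ i x, x ∈ B i → g x ∈ B (f i) := by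
    intro i x hx
    rw [← hf i]
    exact Finset.mem_image_of_mem _ hx
  -- Δ is not g-invariant
  have hΔne : Δ.Nonempty := by
    rw [← Finset.card_pos, hΔ]; omega
  have hΔlt : Δ.card < n := by rw [hΔ]; omega
  have hdc : Δ.image g = Δᶜ := by
    rcases hd with h | h
    · exfalso
      refine no_invariant_subset n g hc hs Δ hΔne hΔlt ?_
      intro x hx
      rw [← h]; exact Finset.mem_image_of_mem _ hx
    · exact h
  -- alternation
  have halt : ∀ x, x ∈ Δ ↔ g x ∉ Δ := by
    intro x
    constructor
    · intro hx
      have : g x ∈ Δᶜ := by rw [← hdc]; exact Finset.mem_image_of_mem _ hx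
      simpa using this
    · intro hx
      have hxc : g x ∈ Δᶜ := by simpa using hx
      rw [← hdc, Finset.mem_image] at hxc
      obtain ⟨y, hy, hyx⟩ := hxc
      rwa [← g.injective hyx]
  -- base point
  obtain ⟨x0, hx0⟩ := hΔne
  have hx0B : ∃ i, x0 ∈ B i := by
    have : x0 ∈ (Finset.univ : Finset (Fin 4)).biUnion B := by
      rw [hunion]; exact Finset.mem_univ x0
    simpa using this
  obtain ⟨i0, hi0⟩ := hx0B
  -- block uniqueness
  have huniq : ∀ x (a b : Fin 4), x ∈ B a → x ∈ B b → a = b := by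
    intro x a b ha hb
    by_contra hne
    exact Finset.disjoint_left.mp (hdisj a b hne) ha hb
  -- the orbit of i0 under f has no small period
  have hper : ∀ m : ℕ, 1 ≤ m → m ≤ 3 → f^[m] i0 ≠ i0 := by
    intro m hm1 hm3 hme
    set S : Finset (Fin n) := (Finset.range m).biUnion (fun j => B (f^[j] i0)) with hS
    have hne : S.Nonempty := ⟨x0, Finset.mem_biUnion.mpr ⟨0, Finset.mem_range.mpr hm1, hi0⟩⟩
    have hcardS : S.card < n := by
      calc S.card ≤ ∑ j ∈ Finset.range m, (B (f^[j] i0)).card := Finset.card_biUnion_le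
        _ = m * (n / 4) := by simp [hcard]
        _ ≤ 3 * (n / 4) := Nat.mul_le_mul_right _ hm3
        _ < n := by omega
    refine no_invariant_subset n g hc hs S hne hcardS ?_
    intro x hx
    rw [hS, Finset.mem_biUnion] at hx ⊢
    obtain ⟨j, hj, hxj⟩ := hx
    rw [Finset.mem_range] at hj
    have hstep : g x ∈ B (f^[j + 1] i0) := by
      rw [Function.iterate_succ_apply']
      exact hfmem _ _ hxj
    by_cases hjm : j + 1 = m
    · exact ⟨0, Finset.mem_range.mpr hm1, by rwa [hjm, hme] at hstep⟩
    · exact ⟨j + 1, Finset.mem_range.mpr (by omega), hstep⟩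
  -- f is injective
  have hinj : Function.Injective f := by
    intro a b hab
    have hBab : B a = B b := by
      have : B (f a) = B (f b) := by rw [hab]
      rw [← hf a, ← hf b] at this
      exact Finset.image_injective g.injective this
    by_contra hne
    have hd' := hdisj a b hne
    rw [hBab, disjoint_self] at hd'
    have := hcard b
    rw [hd'] at this
    simp at this
    omega
  have hiter_inj : ∀ m : ℕ, Function.Injective (f^[m]) := fun m => hinj.iterate m
  -- the map j ↦ f^[j] i0 on Fin 4 is injective
  have hphi : Function.Injective (fun j : Fin 4 => f^[(j : ℕ)] i0) := by
    intro a b hab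
    simp only at hab
    by_contra hne
    rcases lt_or_gt_of_ne hne with h | h
    · have h' : f^[(a : ℕ)] (f^[(b : ℕ) - (a : ℕ)] i0) = f^[(a : ℕ)] i0 := by
        rw [← Function.iterate_add_apply, show (a : ℕ) + ((b : ℕ) - (a : ℕ)) = (b : ℕ) by omega]
        exact hab.symm
      have := hiter_inj _ h'
      exact hper _ (by omega) (by omega) this
    · have h' : f^[(b : ℕ)] (f^[(a : ℕ) - (b : ℕ)] i0) = f^[(b : ℕ)] i0 := by
        rw [← Function.iterate_add_apply, show (b : ℕ) + ((a : ℕ) - (b : ℕ)) = (a : ℕ) by omega]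
        exact hab
      have := hiter_inj _ h'
      exact hper _ (by omega) (by omega) this
  -- period 4
  have h4per : f^[4] i0 = i0 := by
    obtain ⟨j, hj⟩ := Finite.injective_iff_surjective.mp hphi (f^[4] i0)
    simp only at hj
    rcases Nat.eq_zero_or_pos (j : ℕ) with h | h
    · rw [h] at hj; simpa using hj.symm
    · exfalso
      have h' : f^[(j : ℕ)] (f^[4 - (j : ℕ)] i0) = f^[(j : ℕ)] i0 := by
        rw [← Function.iterate_add_apply, show (j : ℕ) + (4 - (j : ℕ)) = 4 by omega]
        exact hj.symm
      have := hiter_inj _ h'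
      exact hper _ (by omega) (by omega) this
  have hmod : ∀ k : ℕ, f^[k] i0 = f^[k % 4] i0 := by
    intro k
    conv_lhs => rw [show k = k % 4 + 4 * (k / 4) by omega]
    rw [Function.iterate_add_apply, Function.iterate_mul, Function.iterate_fixed h4per]
  -- block of g^k x0
  have hblk : ∀ k : ℕ, (g ^ k) x0 ∈ B (f^[k] i0) := by
    intro k
    induction k with
    | zero => simpa using hi0
    | succ m ih =>
      rw [pow_succ', Function.iterate_succ_apply']
      exact hfmem _ _ ih
  -- parity of g^k x0
  have hpar : ∀ k : ℕ, ((g ^ k) x0 ∈ Δ ↔ Even k) := by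
    intro k
    induction k with
    | zero => simpa using hx0
    | succ m ih =>
      rw [pow_succ']
      simp only [Equiv.Perm.coe_mul, Function.comp_apply]
      rw [Nat.even_add_one, ← ih]
      have := halt ((g ^ m) x0)
      tauto
  -- conclude
  refine ⟨i0, f^[2] i0, fun h => hper 2 (by norm_num) (by norm_num) h.symm, ?_⟩
  have hsupp : g.support = Finset.univ :=
    Finset.eq_univ_of_card _ (by simp [hs])
  ext y
  have hgx0 : g x0 ≠ x0 := by
    rw [← Equiv.Perm.mem_support, hsupp]; exact Finset.mem_univ x0
  have hgy : g y ≠ y := by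
    rw [← Equiv.Perm.mem_support, hsupp]; exact Finset.mem_univ y
  obtain ⟨k, hk⟩ := hc.exists_pow_eq hgx0 hgy
  subst hk
  have hB := hblk k
  rw [hmod] at hB
  rw [Finset.mem_union, hpar k]
  constructor
  · intro hek
    have h2 : k % 4 = 0 ∨ k % 4 = 2 := by
      rcases hek with ⟨t, ht⟩; omega
    rcases h2 with h | h
    · left; rw [h] at hB; simpa using hB
    · right; rw [h] at hB; exact hB
  · rintro (h | h)
    · have he : f^[k % 4] i0 = i0 := huniq _ _ _ hB (by simpa using h)
      have : k % 4 = 0 := by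
        by_contra hne
        exact hper _ (by omega) (by omega) he
      exact ⟨k / 2, by omega⟩
    · have he : f^[k % 4] i0 = f^[2] i0 := huniq _ _ _ hB h
      have hk2 : (⟨k % 4, by omega⟩ : Fin 4) = ⟨2, by norm_num⟩ := hphi (by simpa using he)
      have : k % 4 = 2 := by simpa using congrArg Fin.val hk2
      exact ⟨k / 2, by omega⟩
end

section
/- Let n be even, and let Δ₁, Δ₂ be distinct subsets of {1,...,n} of size n/2 each containing the point 1. Suppose H ≤ S_n is the stabilizer of a partition of {1,...,n} into 4 blocks of size n/4, and suppose H contains an n-cycle stabilizing {Δ₁, Δ₁ᶜ} and also an n-cycle stabilizing {Δ₂, Δ₂ᶜ}. Then the four blocks of H are exactly Δ₁ ∩ Δ₂, Δ₁ \ Δ₂, Δ₂ \ Δ₁, and the complement of Δ₁ ∪ Δ₂; in particular |Δ₁ ∩ Δ₂| = n/4, and at most one such subgroup H exists for a given pair (Δ₁, Δ₂). -/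
open Finset Equiv

lemma fix_dvd {n : ℕ} (g : Equiv.Perm (Fin n)) (hc : g.IsCycle)
    (hs : g.support = Finset.univ) (x : Fin n) (t : ℕ) (h : (g ^ t) x = x) : n ∣ t := by
  have hmove : ∀ z : Fin n, g z ≠ z := by
    intro z; have : z ∈ g.support := by rw [hs]; exact Finset.mem_univ z
    exact Equiv.Perm.mem_support.mp this
  have hgt : g ^ t = 1 := by
    ext z
    obtain ⟨k, hk⟩ := hc.exists_pow_eq (hmove x) (hmove z)
    have : (g ^ t) z = (g ^ k) ((g ^ t) x) := by
      rw [← hk, ← Equiv.Perm.mul_apply, ← Equiv.Perm.mul_apply, ← pow_add, ← pow_add,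
        Nat.add_comm]
    simp [this, h, hk]
  have := orderOf_dvd_of_pow_eq_one hgt
  rwa [hc.orderOf, hs, Finset.card_univ, Fintype.card_fin] at this

lemma pow_eq_pow_dvd {n : ℕ} (g : Equiv.Perm (Fin n)) (hc : g.IsCycle)
    (hs : g.support = Finset.univ) (x : Fin n) {s t : ℕ} (hst : s ≤ t)
    (h : (g ^ s) x = (g ^ t) x) : n ∣ t - s := by
  apply fix_dvd g hc hs ((g ^ s) x)
  rw [← Equiv.Perm.mul_apply, ← pow_add, Nat.sub_add_cancel hst, ← h]

-- injectivity of k ↦ g^(c*k+a) x on range r when c*(r-1)+a ... simpler: general pairwise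
lemma pow_inj_on {n : ℕ} (g : Equiv.Perm (Fin n)) (hc : g.IsCycle)
    (hs : g.support = Finset.univ) (x : Fin n) {s t : ℕ} (hsn : s < n) (htn : t < n)
    (h : (g ^ s) x = (g ^ t) x) : s = t := by
  rcases le_total s t with hle | hle
  · obtain ⟨q, hq⟩ := pow_eq_pow_dvd g hc hs x hle h
    rcases q with _ | q
    · omega
    · have := Nat.le_mul_of_pos_right n (show 0 < q + 1 by omega); omega
  · obtain ⟨q, hq⟩ := pow_eq_pow_dvd g hc hs x hle h.symm
    rcases q with _ | q
    · omega
    · have := Nat.le_mul_of_pos_right n (show 0 < q + 1 by omega); omega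


open Finset Equiv

lemma image_pow_invariant {n : ℕ} (g : Equiv.Perm (Fin n)) (d : ℕ)
    (S : Finset (Fin n)) (hS : S.image ⇑(g ^ d) = S) (y : Fin n) (hy : y ∈ S) :
    ∀ k : ℕ, (g ^ (d * k)) y ∈ S := by
  intro k
  induction k with
  | zero => simpa using hy
  | succ k ih =>
    have : (g ^ (d * (k + 1))) y = (g ^ d) ((g ^ (d * k)) y) := by
      rw [← Equiv.Perm.mul_apply, ← pow_add]; ring_nf
    rw [this, ← hS]
    exact Finset.mem_image_of_mem _ ih

lemma block_sub_or_disj {n : ℕ} (h0 : 0 < n) (h4 : 4 ∣ n)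
    (Δ : Finset (Fin n)) (hΔ : Δ.card = n / 2)
    (x : Fin n) (hx : x ∈ Δ)
    (B : Fin 4 → Finset (Fin n))
    (hdisj : ∀ i j, i ≠ j → Disjoint (B i) (B j))
    (hcard : ∀ i, (B i).card = n / 4)
    (hunion : (Finset.univ : Finset (Fin 4)).biUnion B = Finset.univ)
    (g : Equiv.Perm (Fin n)) (hc : g.IsCycle) (hs : g.support = Finset.univ)
    (hB : ∀ i, ∃ j, (B i).image ⇑g = B j)
    (hΔg : Δ.image ⇑g = Δ ∨ Δ.image ⇑g = Δᶜ) :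
    ∀ i, B i ⊆ Δ ∨ Disjoint (B i) Δ := by
  obtain ⟨m, hm⟩ := h4
  have hm0 : 0 < m := by omega
  have hn2 : n / 2 = 2 * m := by omega
  have hn4 : n / 4 = m := by omega
  -- rule out Δ.image g = Δ
  have hmove : ∀ z : Fin n, g z ≠ z := by
    intro z; have : z ∈ g.support := by rw [hs]; exact Finset.mem_univ z
    exact Equiv.Perm.mem_support.mp this
  have hΔc : Δ.image ⇑g = Δᶜ := by
    rcases hΔg with h | h
    · exfalso
      have hne : Δ ≠ Finset.univ := by
        intro he; rw [he, Finset.card_univ, Fintype.card_fin] at hΔ; omega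
      obtain ⟨y, hy⟩ : ∃ y, y ∉ Δ := by
        by_contra hall; push_neg at hall; exact hne (Finset.eq_univ_iff_forall.mpr hall)
      obtain ⟨k, hk⟩ := hc.exists_pow_eq (hmove x) (hmove y)
      have h1 : Δ.image ⇑(g ^ 1) = Δ := by simpa using h
      have := image_pow_invariant g 1 Δ h1 x hx k
      rw [one_mul, hk] at this
      exact hy this
    · exact h
  -- Δ invariant under g^2
  have hΔ2 : Δ.image ⇑(g ^ 2) = Δ := by
    have hcompl : ∀ S : Finset (Fin n), Sᶜ.image ⇑g = (S.image ⇑g)ᶜ := by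
      intro S
      ext y
      simp only [Finset.mem_image, Finset.mem_compl]
      constructor
      · rintro ⟨z, hz, rfl⟩ ⟨w, hw, hwz⟩
        exact hz (by rwa [← g.injective hwz])
      · intro hy
        refine ⟨g⁻¹ y, fun hmem => hy ⟨g⁻¹ y, hmem, by simp⟩, by simp⟩
    have : Δ.image ⇑(g ^ 2) = (Δ.image ⇑g).image ⇑g := by
      rw [Finset.image_image, ← Equiv.Perm.coe_mul, ← pow_two]
    rw [this, hΔc, hcompl, hΔc, compl_compl]
  -- Δ is the orbit of x under g^2
  have hΔeq : Δ = (Finset.range (2 * m)).image (fun k => (g ^ (2 * k)) x) := by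
    have hsub : (Finset.range (2 * m)).image (fun k => (g ^ (2 * k)) x) ⊆ Δ := by
      intro y hy
      simp only [Finset.mem_image, Finset.mem_range] at hy
      obtain ⟨k, _, rfl⟩ := hy
      exact image_pow_invariant g 2 Δ hΔ2 x hx k
    have hcardO : ((Finset.range (2 * m)).image (fun k => (g ^ (2 * k)) x)).card = 2 * m := by
      rw [Finset.card_image_of_injOn, Finset.card_range]
      intro a ha b hb hab
      simp only [Finset.mem_coe, Finset.mem_range] at ha hb
      have := pow_inj_on g hc hs x (s := 2 * a) (t := 2 * b) (by omega) (by omega) hab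
      omega
    refine (Finset.eq_of_subset_of_card_le hsub ?_).symm
    rw [hcardO, hΔ]; omega
  -- block containing x
  obtain ⟨i₀, hi₀⟩ : ∃ i, x ∈ B i := by
    have hxmem : x ∈ (Finset.univ : Finset (Fin 4)).biUnion B := by
      rw [hunion]; exact Finset.mem_univ x
    simpa using hxmem
  -- no block is invariant under a small positive power of g
  have hsmall : ∀ (j : Fin 4) (y : Fin n), y ∈ B j → ∀ d, 0 < d → d < 4 →
      (B j).image ⇑(g ^ d) = B j → False := by
    intro j y hy d hd0 hd4 hinv
    have hsub : (Finset.range (m + 1)).image (fun k => (g ^ (d * k)) y) ⊆ B j := by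
      intro z hz
      simp only [Finset.mem_image, Finset.mem_range] at hz
      obtain ⟨k, _, rfl⟩ := hz
      exact image_pow_invariant g d (B j) hinv y hy k
    have hcardQ : ((Finset.range (m + 1)).image (fun k => (g ^ (d * k)) y)).card = m + 1 := by
      rw [Finset.card_image_of_injOn, Finset.card_range]
      intro a ha b hb hab
      simp only [Finset.mem_coe, Finset.mem_range] at ha hb
      have hda : d * a < n := by
        have : d * a ≤ 3 * m := Nat.mul_le_mul (by omega) (by omega)
        omega
      have hdb : d * b < n := by
        have : d * b ≤ 3 * m := Nat.mul_le_mul (by omega) (by omega)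
        omega
      have := pow_inj_on g hc hs y hda hdb hab
      exact Nat.eq_of_mul_eq_mul_left hd0 this
    have hle := Finset.card_le_card hsub
    rw [hcardQ, hcard j, hn4] at hle
    omega
  -- the chain of blocks
  let ι : ℕ → Fin 4 := fun a => Nat.rec i₀ (fun _ prev => Classical.choose (hB prev)) a
  have hι0 : ι 0 = i₀ := rfl
  have hιs : ∀ a, B (ι (a + 1)) = (B (ι a)).image ⇑g := fun a =>
    (Classical.choose_spec (hB (ι a))).symm
  have himg : ∀ a, (B i₀).image ⇑(g ^ a) = B (ι a) := by
    intro a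
    induction a with
    | zero => simp [hι0]
    | succ a ih =>
      rw [hιs a, ← ih, Finset.image_image, ← Equiv.Perm.coe_mul, ← pow_succ']
  have hdist : ∀ a b, a < b → b ≤ 4 → b - a < 4 → ι a ≠ ι b := by
    intro a b hab hb4 hd he
    have h2 : (B i₀).image ⇑(g ^ b) = ((B i₀).image ⇑(g ^ a)).image ⇑(g ^ (b - a)) := by
      rw [Finset.image_image, ← Equiv.Perm.coe_mul, ← pow_add,
        Nat.sub_add_cancel (le_of_lt hab)]
    rw [himg a, himg b, ← he] at h2
    exact hsmall (ι a) ((g ^ a) x) (by rw [← himg a]; exact Finset.mem_image_of_mem _ hi₀)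
      (b - a) (by omega) hd h2.symm
  have hinj : Set.InjOn ι ↑(Finset.range 4) := by
    intro a ha b hb hab
    simp only [Finset.coe_range, Set.mem_Iio] at ha hb
    by_contra hne'
    rcases Nat.lt_or_ge a b with h | h
    · exact hdist a b h (by omega) (by omega) hab
    · exact hdist b a (by omega) (by omega) (by omega) hab.symm
  have huniv4 : ∀ j : Fin 4, ∃ a, a < 4 ∧ ι a = j := by
    have himgu : (Finset.range 4).image ι = Finset.univ :=
      Finset.eq_univ_of_card _
        (by rw [Finset.card_image_of_injOn hinj, Finset.card_range, Fintype.card_fin])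
    intro j
    have : j ∈ (Finset.range 4).image ι := by rw [himgu]; exact Finset.mem_univ j
    simp only [Finset.mem_image, Finset.mem_range] at this
    obtain ⟨a, ha, hja⟩ := this
    exact ⟨a, ha, hja⟩
  have hι4 : (B i₀).image ⇑(g ^ 4) = B i₀ := by
    obtain ⟨a, ha4, hae⟩ := huniv4 (ι 4)
    have ha0 : a = 0 := by
      by_contra h
      exact hdist a 4 (by omega) le_rfl (by omega) hae
    rw [himg 4, ← hae, ha0, hι0]
  -- B i₀ is the orbit of x under g^4
  have hBi₀ : B i₀ = (Finset.range m).image (fun k => (g ^ (4 * k)) x) := by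
    have hsub : (Finset.range m).image (fun k => (g ^ (4 * k)) x) ⊆ B i₀ := by
      intro y hy
      simp only [Finset.mem_image, Finset.mem_range] at hy
      obtain ⟨k, _, rfl⟩ := hy
      exact image_pow_invariant g 4 (B i₀) hι4 x hi₀ k
    have hcardO : ((Finset.range m).image (fun k => (g ^ (4 * k)) x)).card = m := by
      rw [Finset.card_image_of_injOn, Finset.card_range]
      intro a ha b hb hab
      simp only [Finset.mem_coe, Finset.mem_range] at ha hb
      have := pow_inj_on g hc hs x (s := 4 * a) (t := 4 * b) (by omega) (by omega) hab
      omega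
    refine (Finset.eq_of_subset_of_card_le hsub ?_).symm
    rw [hcardO, hcard i₀]; omega
  -- conclude
  intro i
  obtain ⟨a, ha4, rfl⟩ := huniv4 i
  have hBa : B (ι a) = (Finset.range m).image (fun k => (g ^ (a + 4 * k)) x) := by
    rw [← himg a, hBi₀, Finset.image_image]
    refine Finset.image_congr ?_
    intro k _
    simp only [Function.comp_apply]
    rw [← Equiv.Perm.mul_apply, ← pow_add]
  interval_cases a
  · left
    rw [hBa, hΔeq]
    intro y hy
    simp only [Finset.mem_image, Finset.mem_range] at hy ⊢
    obtain ⟨k, hk, rfl⟩ := hy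
    exact ⟨2 * k, by omega, by rw [show 2 * (2 * k) = 0 + 4 * k by ring]⟩
  · right
    rw [Finset.disjoint_left]
    intro y hyB hyΔ
    rw [hBa] at hyB
    rw [hΔeq] at hyΔ
    simp only [Finset.mem_image, Finset.mem_range] at hyB hyΔ
    obtain ⟨k, hk, hky⟩ := hyB
    obtain ⟨l, hl, hly⟩ := hyΔ
    have := pow_inj_on g hc hs x (s := 1 + 4 * k) (t := 2 * l) (by omega) (by omega)
      (by rw [hky, hly])
    omega
  · left
    rw [hBa, hΔeq]
    intro y hy
    simp only [Finset.mem_image, Finset.mem_range] at hy ⊢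
    obtain ⟨k, hk, rfl⟩ := hy
    exact ⟨1 + 2 * k, by omega, by rw [show 2 * (1 + 2 * k) = 2 + 4 * k by ring]⟩
  · right
    rw [Finset.disjoint_left]
    intro y hyB hyΔ
    rw [hBa] at hyB
    rw [hΔeq] at hyΔ
    simp only [Finset.mem_image, Finset.mem_range] at hyB hyΔ
    obtain ⟨k, hk, hky⟩ := hyB
    obtain ⟨l, hl, hly⟩ := hyΔ
    have := pow_inj_on g hc hs x (s := 3 + 4 * k) (t := 2 * l) (by omega) (by omega)
      (by rw [hky, hly])
    omega


theorem four_blocks_determined (n : ℕ) (hn : Even n) (h0 : 0 < n)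
    (Δ₁ Δ₂ : Finset (Fin n)) (hne : Δ₁ ≠ Δ₂)
    (hΔ₁ : Δ₁.card = n / 2) (hΔ₂ : Δ₂.card = n / 2)
    (x : Fin n) (hx₁ : x ∈ Δ₁) (hx₂ : x ∈ Δ₂)
    (B : Fin 4 → Finset (Fin n))
    (hdisj : ∀ i j, i ≠ j → Disjoint (B i) (B j))
    (hcard : ∀ i, (B i).card = n / 4)
    (hunion : (Finset.univ : Finset (Fin 4)).biUnion B = Finset.univ)
    (hg₁ : ∃ g : Equiv.Perm (Fin n), g.IsCycle ∧ g.support.card = n ∧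
      (∀ i, ∃ j, (B i).image g = B j) ∧ (Δ₁.image g = Δ₁ ∨ Δ₁.image g = Δ₁ᶜ))
    (hg₂ : ∃ g : Equiv.Perm (Fin n), g.IsCycle ∧ g.support.card = n ∧
      (∀ i, ∃ j, (B i).image g = B j) ∧ (Δ₂.image g = Δ₂ ∨ Δ₂.image g = Δ₂ᶜ)) :
    ({S : Finset (Fin n) | ∃ i, S = B i}
        = {Δ₁ ∩ Δ₂, Δ₁ \ Δ₂, Δ₂ \ Δ₁, (Δ₁ ∪ Δ₂)ᶜ}) ∧
    (Δ₁ ∩ Δ₂).card = n / 4 := by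
  classical
  obtain ⟨g₁, hc₁, hs₁, hB₁, hΔg₁⟩ := hg₁
  obtain ⟨g₂, hc₂, hs₂, hB₂, hΔg₂⟩ := hg₂
  have hsu₁ : g₁.support = Finset.univ :=
    Finset.eq_univ_of_card _ (by rw [hs₁, Fintype.card_fin])
  have hsu₂ : g₂.support = Finset.univ :=
    Finset.eq_univ_of_card _ (by rw [hs₂, Fintype.card_fin])
  have h4n : 4 ∣ n := by
    have hcb : ((Finset.univ : Finset (Fin 4)).biUnion B).card = ∑ i : Fin 4, (B i).card :=
      Finset.card_biUnion (fun i _ j _ hij => hdisj i j hij)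
    rw [hunion, Finset.card_univ, Fintype.card_fin] at hcb
    simp only [hcard] at hcb
    rw [Finset.sum_const, Finset.card_univ, Fintype.card_fin, smul_eq_mul] at hcb
    exact ⟨n / 4, hcb⟩
  obtain ⟨m, hm⟩ := h4n
  have hm0 : 0 < m := by omega
  have hn2 : n / 2 = 2 * m := by omega
  have hn4 : n / 4 = m := by omega
  have hsd₁ := block_sub_or_disj h0 ⟨m, hm⟩ Δ₁ hΔ₁ x hx₁ B hdisj hcard hunion g₁ hc₁ hsu₁ hB₁ hΔg₁
  have hsd₂ := block_sub_or_disj h0 ⟨m, hm⟩ Δ₂ hΔ₂ x hx₂ B hdisj hcard hunion g₂ hc₂ hsu₂ hB₂ hΔg₂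
  obtain ⟨i₀, hi₀⟩ : ∃ i, x ∈ B i := by
    have hxmem : x ∈ (Finset.univ : Finset (Fin 4)).biUnion B := by
      rw [hunion]; exact Finset.mem_univ x
    simpa using hxmem
  have hdj : ∀ {i j : Fin 4}, i ≠ j → ∀ {y : Fin n}, y ∈ B i → y ∈ B j → False := by
    intro i j hij y hy hz
    exact Finset.disjoint_left.mp (hdisj i j hij) hy hz
  set T₁ : Finset (Fin 4) := Finset.univ.filter (fun i => B i ⊆ Δ₁) with hT₁def
  set T₂ : Finset (Fin 4) := Finset.univ.filter (fun i => B i ⊆ Δ₂) with hT₂def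
  have hTe : ∀ (T : Finset (Fin 4)) (Δ : Finset (Fin n)),
      T = Finset.univ.filter (fun i => B i ⊆ Δ) → (∀ i, B i ⊆ Δ ∨ Disjoint (B i) Δ) →
      Δ = T.biUnion B := by
    intro T Δ hT hsd
    ext y
    simp only [Finset.mem_biUnion, hT, Finset.mem_filter, Finset.mem_univ, true_and]
    constructor
    · intro hy
      obtain ⟨i, hyi⟩ : ∃ i, y ∈ B i := by
        have : y ∈ (Finset.univ : Finset (Fin 4)).biUnion B := by
          rw [hunion]; exact Finset.mem_univ y
        simpa using this
      refine ⟨i, ?_, hyi⟩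
      rcases hsd i with h | h
      · exact h
      · exact absurd hy (Finset.disjoint_left.mp h hyi)
    · rintro ⟨i, hi, hyi⟩
      exact hi hyi
  have hΔ₁e : Δ₁ = T₁.biUnion B := hTe T₁ Δ₁ hT₁def hsd₁
  have hΔ₂e : Δ₂ = T₂.biUnion B := hTe T₂ Δ₂ hT₂def hsd₂
  have hcardT : ∀ (T : Finset (Fin 4)) (Δ : Finset (Fin n)),
      Δ = T.biUnion B → Δ.card = n / 2 → T.card = 2 := by
    intro T Δ hT hΔc
    have h1 : Δ.card = ∑ i ∈ T, (B i).card := by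
      rw [hT]; exact Finset.card_biUnion (fun i _ j _ hij => hdisj i j hij)
    rw [hΔc] at h1
    simp only [hcard] at h1
    rw [Finset.sum_const, smul_eq_mul, hn2, hn4] at h1
    exact Nat.eq_of_mul_eq_mul_right hm0 h1.symm
  have hcT₁ : T₁.card = 2 := hcardT T₁ Δ₁ hΔ₁e hΔ₁
  have hcT₂ : T₂.card = 2 := hcardT T₂ Δ₂ hΔ₂e hΔ₂
  have hi₀T₁ : i₀ ∈ T₁ := by
    rw [hT₁def]; simp only [Finset.mem_filter, Finset.mem_univ, true_and]
    rcases hsd₁ i₀ with h | h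
    · exact h
    · exact absurd hx₁ (Finset.disjoint_left.mp h hi₀)
  have hi₀T₂ : i₀ ∈ T₂ := by
    rw [hT₂def]; simp only [Finset.mem_filter, Finset.mem_univ, true_and]
    rcases hsd₂ i₀ with h | h
    · exact h
    · exact absurd hx₂ (Finset.disjoint_left.mp h hi₀)
  -- extract second elements
  have hex : ∀ T : Finset (Fin 4), T.card = 2 → i₀ ∈ T → ∃ a, a ≠ i₀ ∧ T = {i₀, a} := by
    intro T hc2 hiT
    obtain ⟨u, v, huv, rfl⟩ := Finset.card_eq_two.mp hc2
    simp only [Finset.mem_insert, Finset.mem_singleton] at hiT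
    rcases hiT with rfl | rfl
    · exact ⟨v, fun h => huv h.symm, rfl⟩
    · exact ⟨u, fun h => huv h, by rw [Finset.pair_comm]⟩
  obtain ⟨a, hai₀, hT₁pair⟩ := hex T₁ hcT₁ hi₀T₁
  obtain ⟨b, hbi₀, hT₂pair⟩ := hex T₂ hcT₂ hi₀T₂
  have hab : a ≠ b := by
    intro h
    subst h
    exact hne (by rw [hΔ₁e, hΔ₂e, hT₁pair, hT₂pair])
  have hΔ₁u : Δ₁ = B i₀ ∪ B a := by
    rw [hΔ₁e, hT₁pair]
    simp [Finset.biUnion_insert]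
  have hΔ₂u : Δ₂ = B i₀ ∪ B b := by
    rw [hΔ₂e, hT₂pair]
    simp [Finset.biUnion_insert]
  obtain ⟨c, hc⟩ : ∃ c : Fin 4, c ∉ ({i₀, a, b} : Finset (Fin 4)) := by
    by_contra hno
    push_neg at hno
    have h1 : (Finset.univ : Finset (Fin 4)) ⊆ {i₀, a, b} := fun z _ => hno z
    have h2 := Finset.card_le_card h1
    rw [Finset.card_univ, Fintype.card_fin] at h2
    have h3 : ({i₀, a, b} : Finset (Fin 4)).card ≤ 3 := by
      refine le_trans (Finset.card_insert_le _ _) ?_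
      have h4 := Finset.card_insert_le a ({b} : Finset (Fin 4))
      rw [Finset.card_singleton] at h4
      omega
    omega
  simp only [Finset.mem_insert, Finset.mem_singleton, not_or] at hc
  obtain ⟨hci₀, hca, hcb⟩ := hc
  have huniv : ∀ j : Fin 4, j = i₀ ∨ j = a ∨ j = b ∨ j = c := by
    have hc4 : ({i₀, a, b, c} : Finset (Fin 4)).card = 4 := by
      rw [Finset.card_insert_of_notMem (by simp [hai₀.symm, hbi₀.symm, Ne.symm hci₀]),
        Finset.card_insert_of_notMem (by simp [hab, Ne.symm hca]),
        Finset.card_insert_of_notMem (by simp [Ne.symm hcb]), Finset.card_singleton]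
    have := Finset.eq_univ_of_card _ (by rw [hc4, Fintype.card_fin])
    intro j
    have hj : j ∈ ({i₀, a, b, c} : Finset (Fin 4)) := by rw [this]; exact Finset.mem_univ j
    simpa using hj
  have e1 : Δ₁ ∩ Δ₂ = B i₀ := by
    ext y
    rw [Finset.mem_inter, hΔ₁u, hΔ₂u]
    simp only [Finset.mem_union]
    constructor
    · rintro ⟨h1 | h1, h2 | h2⟩
      · exact h1
      · exact h1
      · exact h2
      · exact (hdj hab h1 h2).elim
    · intro h; exact ⟨Or.inl h, Or.inl h⟩
  have e2 : Δ₁ \ Δ₂ = B a := by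
    ext y
    rw [Finset.mem_sdiff, hΔ₁u, hΔ₂u]
    simp only [Finset.mem_union, not_or]
    constructor
    · rintro ⟨h1 | h1, h2, h3⟩
      · exact (h2 h1).elim
      · exact h1
    · intro h
      exact ⟨Or.inr h, fun h' => hdj hai₀ h h', fun h' => hdj hab h h'⟩
  have e3 : Δ₂ \ Δ₁ = B b := by
    ext y
    rw [Finset.mem_sdiff, hΔ₁u, hΔ₂u]
    simp only [Finset.mem_union, not_or]
    constructor
    · rintro ⟨h1 | h1, h2, h3⟩
      · exact (h2 h1).elim
      · exact h1
    · intro h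
      exact ⟨Or.inr h, fun h' => hdj hbi₀ h h', fun h' => hdj (Ne.symm hab) h h'⟩
  have e4 : (Δ₁ ∪ Δ₂)ᶜ = B c := by
    ext y
    rw [Finset.mem_compl, Finset.mem_union, hΔ₁u, hΔ₂u]
    simp only [Finset.mem_union, not_or]
    constructor
    · rintro ⟨⟨h1, h2⟩, h3, h4⟩
      obtain ⟨j, hyj⟩ : ∃ j, y ∈ B j := by
        have : y ∈ (Finset.univ : Finset (Fin 4)).biUnion B := by
          rw [hunion]; exact Finset.mem_univ y
        simpa using this
      rcases huniv j with rfl | rfl | rfl | rfl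
      · exact (h1 hyj).elim
      · exact (h2 hyj).elim
      · exact (h4 hyj).elim
      · exact hyj
    · intro h
      exact ⟨⟨fun h' => hdj hci₀ h h', fun h' => hdj hca h h'⟩,
        fun h' => hdj hci₀ h h', fun h' => hdj hcb h h'⟩
  constructor
  · ext S
    simp only [Set.mem_setOf_eq, Set.mem_insert_iff, Set.mem_singleton_iff]
    constructor
    · rintro ⟨i, rfl⟩
      rcases huniv i with rfl | rfl | rfl | rfl
      · exact Or.inl e1.symm
      · exact Or.inr (Or.inl e2.symm)
      · exact Or.inr (Or.inr (Or.inl e3.symm))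
      · exact Or.inr (Or.inr (Or.inr e4.symm))
    · rintro (rfl | rfl | rfl | rfl)
      · exact ⟨i₀, e1⟩
      · exact ⟨a, e2⟩
      · exact ⟨b, e3⟩
      · exact ⟨c, e4⟩
  · rw [e1, hcard]
end

section
/- Let Γ be a simple graph on m vertices containing no complete subgraph on r+1 vertices (r ≥ 1). Then Γ has at most (1 - 1/r)·m²/2 edges. -/
open Finset

namespace SimpleGraph

variable {V : Type*} [Fintype V] {G : SimpleGraph V} [DecidableRel G.Adj]

theorem CliqueFree.two_mul_mul_card_edgeFinset_le {r : ℕ} (hfree : G.CliqueFree (r + 1)) :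
    2 * r * #G.edgeFinset ≤ (r - 1) * Fintype.card V ^ 2 := by
  rcases r.eq_zero_or_pos with rfl | hr
  · simp
  obtain ⟨H, _, hmax⟩ := exists_isTuranMaximal (V := V) hr
  have hle : #G.edgeFinset ≤ #H.edgeFinset := hmax.2 hfree
  rw [hmax.nonempty_iso_turanGraph.some.card_edgeFinset_eq] at hle
  grw [hle]
  exact mul_card_edgeFinset_turanGraph_le

end SimpleGraph

theorem turan_bound_general {V : Type*} [Fintype V]
    (Γ : SimpleGraph V) [DecidableRel Γ.Adj]
    (m r : ℕ) (hm : Fintype.card V = m) (hr : 1 ≤ r)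
    (hfree : Γ.CliqueFree (r + 1)) :
    (Γ.edgeFinset.card : ℝ) ≤ (1 - 1 / (r : ℝ)) * (m : ℝ) ^ 2 / 2 := by
  have hbound : (2 * r * #Γ.edgeFinset : ℝ) ≤ (r - 1) * m ^ 2 := by
    have := hfree.two_mul_mul_card_edgeFinset_le
    rw [hm] at this
    exact_mod_cast this
  have hrpos : (0 : ℝ) < r := by exact_mod_cast hr
  rw [one_sub_div hrpos.ne', le_div_iff₀ two_pos, div_mul_eq_mul_div, le_div_iff₀ hrpos]
  linarith

theorem turan_bound {V : Type*} [Fintype V] [DecidableEq V]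
    (Γ : SimpleGraph V) [DecidableRel Γ.Adj]
    (m r : ℕ) (hm : Fintype.card V = m) (hr : 1 ≤ r)
    (hfree : Γ.CliqueFree (r + 1)) :
    (Γ.edgeFinset.card : ℝ) ≤ (1 - 1 / (r : ℝ)) * (m : ℝ) ^ 2 / 2 :=
  turan_bound_general Γ m r hm hr hfree
end
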